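/- arXiv:2402.02905 — 4 statements merged into one kernel-verified Lean document; each statement's English description precedes it below -/
import Mathlib

section
/- Let F₀, F₁, F₂, F₃ be real vector spaces with linear maps d₀ : F₀ → F₁, d₁ : F₁ → F₂, d₂ : F₂ → F₃ satisfying d₁ ∘ d₀ = 0 and d₂ ∘ d₁ = 0. Let V₀ ⊆ F₀, V₁ ⊆ F₁, V₂ ⊆ F₂ be linear subspaces with d₀(V₀) ⊆ V₁ and d₁(V₁) ⊆ V₂. Let ι₁ : F₁ → F₀, ι₂ : F₂ → F₁, ι₃ : F₃ → F₂ be linear maps, and let Π₀ : F₀ → V₀, Π₁ : F₁ → V₁, Π₂ : F₂ → V₂ be linear maps. Define A¹ : V₁ → V₁ by A¹α = d₀(Π₀(ι₁ α)) + Π₁(ι₂(d₁ α)) and A² : V₂ → V₂ by A²β = d₁(Π₁(ι₂ β)) + Π₂(ι₃(d₂ β)). Then for every α ∈ V₁ one has d₁(A¹ α) = A²(d₁ α). -/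
/-- The discrete Lie derivatives defined through Cartan's formula commute with
the exterior derivative, for arbitrary projections onto the discrete spaces. -/
theorem discrete_lie_derivative_commutes_with_d
    {F₀ F₁ F₂ F₃ : Type*}
    [AddCommGroup F₀] [Module ℝ F₀] [AddCommGroup F₁] [Module ℝ F₁]
    [AddCommGroup F₂] [Module ℝ F₂] [AddCommGroup F₃] [Module ℝ F₃]
    (d₀ : F₀ →ₗ[ℝ] F₁) (d₁ : F₁ →ₗ[ℝ] F₂) (d₂ : F₂ →ₗ[ℝ] F₃)
    (hdd₀ : d₁.comp d₀ = 0) (hdd₁ : d₂.comp d₁ = 0)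
    (V₀ : Submodule ℝ F₀) (V₁ : Submodule ℝ F₁) (V₂ : Submodule ℝ F₂)
    (hd₀V : ∀ x ∈ V₀, d₀ x ∈ V₁) (hd₁V : ∀ x ∈ V₁, d₁ x ∈ V₂)
    (ι₁ : F₁ →ₗ[ℝ] F₀) (ι₂ : F₂ →ₗ[ℝ] F₁) (ι₃ : F₃ →ₗ[ℝ] F₂)
    (P₀ : F₀ →ₗ[ℝ] F₀) (P₁ : F₁ →ₗ[ℝ] F₁) (P₂ : F₂ →ₗ[ℝ] F₂)
    (hP₀ : ∀ x : F₀, P₀ x ∈ V₀) (hP₁ : ∀ x : F₁, P₁ x ∈ V₁)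
    (hP₂ : ∀ x : F₂, P₂ x ∈ V₂)
    (A₁ : F₁ → F₁) (A₂ : F₂ → F₂)
    (hA₁ : ∀ α ∈ V₁, A₁ α = d₀ (P₀ (ι₁ α)) + P₁ (ι₂ (d₁ α)))
    (hA₂ : ∀ β ∈ V₂, A₂ β = d₁ (P₁ (ι₂ β)) + P₂ (ι₃ (d₂ β))) :
    ∀ α ∈ V₁, d₁ (A₁ α) = A₂ (d₁ α) := by
  intro α hα
  have h1 : d₁ (d₀ (P₀ (ι₁ α))) = 0 := by
    have := congrArg (fun f => f (P₀ (ι₁ α))) hdd₀; simpa using this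
  have h2 : d₂ (d₁ α) = 0 := by
    have := congrArg (fun f => f α) hdd₁; simpa using this
  rw [hA₁ α hα, hA₂ (d₁ α) (hd₁V α hα), map_add, h1, h2, map_zero, map_zero,
    zero_add, add_zero]
end

section
/- Let U, V, W be finite-dimensional real normed vector spaces, let d₀ : U → V and d₁ : V → W be linear maps with d₁ ∘ d₀ = 0, and let P : ℝ → L(V,U) and Q : ℝ → L(W,V) be continuous families of linear maps. Let β : ℝ → V be differentiable with β′(t) = −( d₀(P(t)(β(t))) + Q(t)(d₁(β(t))) ) for all t ∈ ℝ, and suppose d₁(β(0)) = 0. Then d₁(β(t)) = 0 for all t ∈ ℝ. -/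
/-- Pointwise preservation of the divergence-free constraint: if
`β' = −(d₀ ∘ P + Q ∘ d₁)(β)` with `d₁ ∘ d₀ = 0` and `d₁ β(0) = 0`, then
`d₁ β(t) = 0` for all times. -/
theorem divergence_free_preserved
    {U V W : Type*}
    [NormedAddCommGroup U] [NormedSpace ℝ U] [FiniteDimensional ℝ U]
    [NormedAddCommGroup V] [NormedSpace ℝ V] [FiniteDimensional ℝ V]
    [NormedAddCommGroup W] [NormedSpace ℝ W] [FiniteDimensional ℝ W]
    (d₀ : U →L[ℝ] V) (d₁ : V →L[ℝ] W) (hdd : ∀ x : U, d₁ (d₀ x) = 0)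
    (P : ℝ → V →L[ℝ] U) (Q : ℝ → W →L[ℝ] V)
    (hP : Continuous P) (hQ : Continuous Q)
    (β : ℝ → V)
    (hβ : ∀ t : ℝ, HasDerivAt β (-(d₀ (P t (β t)) + Q t (d₁ (β t)))) t)
    (h0 : d₁ (β 0) = 0) :
    ∀ t : ℝ, d₁ (β t) = 0 := by
  intro t
  set a : ℝ := -(|t| + 1) with ha
  set b : ℝ := |t| + 1 with hb
  have habs : |t| ≤ |t| + 1 := by linarith
  have ht0 : (0 : ℝ) ∈ Set.Ioo a b := by
    constructor
    · rw [ha]; nlinarith [abs_nonneg t]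
    · rw [hb]; nlinarith [abs_nonneg t]
  have htmem : t ∈ Set.Icc a b := by
    constructor
    · rw [ha]; linarith [neg_abs_le t]
    · rw [hb]; linarith [le_abs_self t]
  -- clamp time to the compact interval
  set c : ℝ → ℝ := fun s => max a (min s b) with hc
  have hcmem : ∀ s, c s ∈ Set.Icc a b := by
    intro s
    have hab : a ≤ b := by rw [ha, hb]; linarith [abs_nonneg t]
    exact ⟨le_max_left _ _, max_le hab (min_le_right _ _)⟩
  have hceq : ∀ s ∈ Set.Ioo a b, c s = s := by
    intro s hs
    rw [hc]
    simp only [min_eq_left hs.2.le, max_eq_right hs.1.le]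
  have hccont : Continuous c :=
    continuous_const.max (continuous_id.min continuous_const)
  -- the linear coefficient, with clamped time
  set L : ℝ → W →L[ℝ] W := fun s => -(d₁.comp (Q (c s))) with hL
  have hLcont : Continuous L := (continuous_const.clm_comp (hQ.comp hccont)).neg
  -- uniform Lipschitz bound
  obtain ⟨C, hC⟩ : ∃ C : ℝ, ∀ s : ℝ, ‖L s‖ ≤ C := by
    have hg : Continuous (fun r : ℝ => -(d₁.comp (Q r))) := (continuous_const.clm_comp hQ).neg
    obtain ⟨C, hC⟩ := (isCompact_Icc (a := a) (b := b)).exists_bound_of_continuousOn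
      hg.continuousOn
    exact ⟨C, fun s => by
      have := hC (c s) (hcmem s)
      simpa [hL] using this⟩
  set v : ℝ → W → W := fun s y => L s y with hv
  have hlip : ∀ s : ℝ, LipschitzOnWith C.toNNReal (v s) Set.univ := by
    intro s
    apply LipschitzWith.lipschitzOnWith
    refine ((L s).lipschitz).weaken ?_
    rw [← NNReal.coe_le_coe, coe_nnnorm, Real.coe_toNNReal']
    exact (hC s).trans (le_max_left _ _)
  -- γ solves the ODE
  have hγ' : ∀ s ∈ Set.Ioo a b, HasDerivAt (fun r => d₁ (β r)) (v s (d₁ (β s))) s := by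
    intro s hs
    have h1 : HasDerivAt (fun r => d₁ (β r))
        (d₁ (-(d₀ (P s (β s)) + Q s (d₁ (β s))))) s :=
      (d₁.hasFDerivAt).comp_hasDerivAt s (hβ s)
    have h2 : d₁ (-(d₀ (P s (β s)) + Q s (d₁ (β s)))) = v s (d₁ (β s)) := by
      simp [hv, hL, hceq s hs, hdd]
    rwa [h2] at h1
  have hzero : ∀ s ∈ Set.Ioo a b, HasDerivAt (fun _ : ℝ => (0 : W)) (v s 0) s := by
    intro s _
    simpa [hv] using (hasDerivAt_const s (0 : W))
  have hβcont : Continuous β := continuous_iff_continuousAt.mpr fun s => (hβ s).continuousAt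
  have := ODE_solution_unique_of_mem_Icc (v := v) (s := fun _ => (Set.univ : Set W))
    (fun s _ => hlip s) ht0
    ((d₁.continuous.comp hβcont).continuousOn)
    hγ' (fun _ _ => Set.mem_univ _)
    continuousOn_const hzero (fun _ _ => Set.mem_univ _) h0
  exact this htmem
end

section
/- Let (Ω, μ) be a measure space with μ(Ω) < ∞ and let n, m ≥ 1. Let V be a finite-dimensional space of bounded measurable functions Ω → ℝ, let X be a finite-dimensional space of bounded measurable functions Ω → ℝⁿ, and let W be a finite-dimensional space of bounded measurable functions Ω → ℝᵐ (each equipped with the supremum norm). Let e : ℝ² → ℝ be continuously differentiable. For each v ∈ X let T_v : V → V and S_v : W → W be maps, and let b : X × X → X satisfy b(v,v) = 0 for all v ∈ X. Let ρ, s : ℝ → V, u : ℝ → X, B : ℝ → W be continuously differentiable curves satisfying, for all t ∈ ℝ: (advection) ρ′(t) = −T_{u(t)}(ρ(t)), s′(t) = −T_{u(t)}(s(t)), B′(t) = −S_{u(t)}(B(t)); and (momentum) for all v ∈ X, ∫_Ω [ (ρ′(t)u(t) + ρ(t)u′(t))·v − ρ(t) u(t)·b(v, u(t)) + ( ½|u(t)|²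 − e(ρ(t),s(t)) − ρ(t) ∂₁e(ρ(t),s(t)) )·(T_v ρ(t)) − ρ(t) ∂₂e(ρ(t),s(t))·(T_v s(t)) − B(t)·(S_v B(t)) ] dμ = 0, where all products, norms |·| and dot products are taken pointwise on Ω. Then the total energy E(t) = ∫_Ω [ ½ ρ(t)|u(t)|² + ρ(t) e(ρ(t),s(t)) + ½ |B(t)|² ] dμ is constant in t. -/
open MeasureTheory Topology

section helpers
variable {Ω : Type*} {E : Type*} [NormedAddCommGroup E] [NormedSpace ℝ E]

lemma deriv_mem_of_mem (X : Submodule ℝ (Ω → E)) [FiniteDimensional ℝ X]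
    (u u' : ℝ → Ω → E) (hu : ∀ t, u t ∈ X)
    (hud : ∀ t x, HasDerivAt (fun τ => u τ x) (u' t x) t) (t : ℝ) : u' t ∈ X := by
  have hXc : IsClosed (X : Set (Ω → E)) := X.closed_of_finiteDimensional
  set q : ℝ → Ω → E := fun y x => slope (fun τ => u τ x) t y with hq
  have hqmem : ∀ y, q y ∈ X := by
    intro y
    have : q y = (y - t)⁻¹ • (u y - u t) := by
      funext x; simp [hq, slope_def_module]
    rw [this]
    exact X.smul_mem _ (X.sub_mem (hu y) (hu t))
  have htend : Filter.Tendsto q (𝓝[≠] t) (𝓝 (u' t)) := by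
    rw [tendsto_pi_nhds]
    intro x
    exact (hasDerivAt_iff_tendsto_slope.mp (hud t x))
  exact hXc.mem_of_tendsto htend (Filter.Eventually.of_forall hqmem)

lemma unif_bound_of_curve (X : Submodule ℝ (Ω → E)) [FiniteDimensional ℝ X]
    (hbdd : ∀ f ∈ X, ∃ C : ℝ, ∀ x, ‖f x‖ ≤ C)
    (c : ℝ → Ω → E) (hc : ∀ t, c t ∈ X)
    (hcont : ∀ x, Continuous fun t => c t x) (a b : ℝ) :
    ∃ K : ℝ, 0 ≤ K ∧ ∀ t ∈ Set.Icc a b, ∀ x, ‖c t x‖ ≤ K := by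
  classical
  set d := Module.finrank ℝ X
  let bX : Module.Basis (Fin d) ℝ X := Module.finBasis ℝ X
  have hcurve : Continuous fun t => (⟨c t, hc t⟩ : X) := by
    apply Continuous.subtype_mk
    exact continuous_pi hcont
  -- coefficient bounds
  have hcoord : ∀ i : Fin d, ∃ M : ℝ, ∀ t ∈ Set.Icc a b, |bX.repr ⟨c t, hc t⟩ i| ≤ M := by
    intro i
    have hcont2 : Continuous fun t => bX.repr ⟨c t, hc t⟩ i := by
      have h1 : Continuous fun v : X => bX.repr v i := by
        exact (bX.coord i).continuous_of_finiteDimensional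
      exact h1.comp hcurve
    obtain ⟨M, hM⟩ := isCompact_Icc.exists_bound_of_continuousOn hcont2.continuousOn
    exact ⟨M, fun t ht => by simpa using hM t ht⟩
  choose M hM using hcoord
  have hbas : ∀ i : Fin d, ∃ C : ℝ, 0 ≤ C ∧ ∀ x, ‖(bX i : Ω → E) x‖ ≤ C := by
    intro i
    obtain ⟨C, hC⟩ := hbdd (bX i) (bX i).2
    exact ⟨max C 0, le_max_right _ _, fun x => (hC x).trans (le_max_left _ _)⟩
  choose C hC0 hC using hbas
  refine ⟨∑ i, max (M i) 0 * C i, Finset.sum_nonneg fun i _ =>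
    mul_nonneg (le_max_right _ _) (hC0 i), fun t ht x => ?_⟩
  have hrepr := bX.sum_repr ⟨c t, hc t⟩
  have h2 := congrArg (fun v : X => (v : Ω → E) x) hrepr
  simp only [AddSubmonoidClass.coe_finset_sum, SetLike.val_smul, Finset.sum_apply,
    Pi.smul_apply] at h2
  rw [show c t x = ∑ i, bX.repr ⟨c t, hc t⟩ i • (bX i : Ω → E) x from h2.symm]
  refine (norm_sum_le _ _).trans ?_
  apply Finset.sum_le_sum
  intro i _
  rw [norm_smul, Real.norm_eq_abs]
  exact mul_le_mul ((hM i t ht).trans (le_max_left _ _)) (hC i x) (norm_nonneg _)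
    (le_max_right _ _)

end helpers

open Topology Metric

/-- Semi-discrete energy conservation of the variational scheme: under the
discrete advection equations and the discrete momentum balance, the total
energy `∫ ½ρ|u|² + ρe(ρ,s) + ½|B|²` is constant in time. -/
theorem semidiscrete_energy_conservation
    {Ω : Type*} [MeasurableSpace Ω] (μ : Measure Ω) [IsFiniteMeasure μ]
    (n m : ℕ) (hn : 1 ≤ n) (hm : 1 ≤ m)
    (V : Submodule ℝ (Ω → ℝ))
    (X : Submodule ℝ (Ω → EuclideanSpace ℝ (Fin n)))
    (W : Submodule ℝ (Ω → EuclideanSpace ℝ (Fin m)))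
    (hVfin : FiniteDimensional ℝ V) (hXfin : FiniteDimensional ℝ X)
    (hWfin : FiniteDimensional ℝ W)
    (hVmeas : ∀ f ∈ V, Measurable f)
    (hVbdd : ∀ f ∈ V, ∃ C : ℝ, ∀ x, |f x| ≤ C)
    (hXmeas : ∀ f ∈ X, Measurable f)
    (hXbdd : ∀ f ∈ X, ∃ C : ℝ, ∀ x, ‖f x‖ ≤ C)
    (hWmeas : ∀ f ∈ W, Measurable f)
    (hWbdd : ∀ f ∈ W, ∃ C : ℝ, ∀ x, ‖f x‖ ≤ C)
    (e : ℝ × ℝ → ℝ) (he : ContDiff ℝ 1 e)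
    (T : (Ω → EuclideanSpace ℝ (Fin n)) → (Ω → ℝ) → (Ω → ℝ))
    (hT : ∀ v ∈ X, ∀ f ∈ V, T v f ∈ V)
    (S : (Ω → EuclideanSpace ℝ (Fin n)) →
      (Ω → EuclideanSpace ℝ (Fin m)) → (Ω → EuclideanSpace ℝ (Fin m)))
    (hS : ∀ v ∈ X, ∀ g ∈ W, S v g ∈ W)
    (b : (Ω → EuclideanSpace ℝ (Fin n)) → (Ω → EuclideanSpace ℝ (Fin n)) →
      (Ω → EuclideanSpace ℝ (Fin n)))
    (hb : ∀ v ∈ X, ∀ w ∈ X, b v w ∈ X)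
    (hbdiag : ∀ v ∈ X, b v v = 0)
    (ρ s : ℝ → Ω → ℝ) (u : ℝ → Ω → EuclideanSpace ℝ (Fin n))
    (B : ℝ → Ω → EuclideanSpace ℝ (Fin m))
    (ρ' s' : ℝ → Ω → ℝ) (u' : ℝ → Ω → EuclideanSpace ℝ (Fin n))
    (B' : ℝ → Ω → EuclideanSpace ℝ (Fin m))
    (hρV : ∀ t, ρ t ∈ V) (hsV : ∀ t, s t ∈ V) (huX : ∀ t, u t ∈ X)
    (hBW : ∀ t, B t ∈ W)
    (hρd : ∀ t x, HasDerivAt (fun τ => ρ τ x) (ρ' t x) t)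
    (hsd : ∀ t x, HasDerivAt (fun τ => s τ x) (s' t x) t)
    (hud : ∀ t x, HasDerivAt (fun τ => u τ x) (u' t x) t)
    (hBd : ∀ t x, HasDerivAt (fun τ => B τ x) (B' t x) t)
    (hρc : ∀ x, Continuous fun t => ρ' t x)
    (hsc : ∀ x, Continuous fun t => s' t x)
    (huc : ∀ x, Continuous fun t => u' t x)
    (hBc : ∀ x, Continuous fun t => B' t x)
    (hadvρ : ∀ t x, ρ' t x = -(T (u t) (ρ t) x))
    (hadvs : ∀ t x, s' t x = -(T (u t) (s t) x))
    (hadvB : ∀ t x, B' t x = -(S (u t) (B t) x))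
    (hmom : ∀ t : ℝ, ∀ v ∈ X,
      (∫ x, ((inner ℝ (ρ' t x • u t x + ρ t x • u' t x) (v x) : ℝ)
          - ρ t x * (inner ℝ (u t x) (b v (u t) x) : ℝ)
          + (1 / 2 * ‖u t x‖ ^ 2 - e (ρ t x, s t x)
              - ρ t x * fderiv ℝ e (ρ t x, s t x) (1, 0)) * T v (ρ t) x
          - ρ t x * fderiv ℝ e (ρ t x, s t x) (0, 1) * T v (s t) x
          - (inner ℝ (B t x) (S v (B t) x) : ℝ)) ∂μ) = 0) :
    ∀ t₁ t₂ : ℝ,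
      (∫ x, (1 / 2 * ρ t₁ x * ‖u t₁ x‖ ^ 2 + ρ t₁ x * e (ρ t₁ x, s t₁ x)
          + 1 / 2 * ‖B t₁ x‖ ^ 2) ∂μ)
        = ∫ x, (1 / 2 * ρ t₂ x * ‖u t₂ x‖ ^ 2 + ρ t₂ x * e (ρ t₂ x, s t₂ x)
            + 1 / 2 * ‖B t₂ x‖ ^ 2) ∂μ := by
  classical
  -- abbreviations
  set F : ℝ → Ω → ℝ := fun t x =>
    1 / 2 * ρ t x * ‖u t x‖ ^ 2 + ρ t x * e (ρ t x, s t x) + 1 / 2 * ‖B t x‖ ^ 2 with hFdef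
  set G : ℝ → Ω → ℝ := fun t x =>
    1 / 2 * ρ' t x * ‖u t x‖ ^ 2 + ρ t x * (inner ℝ (u t x) (u' t x) : ℝ)
      + ρ' t x * e (ρ t x, s t x)
      + ρ t x * (ρ' t x * fderiv ℝ e (ρ t x, s t x) (1, 0)
          + s' t x * fderiv ℝ e (ρ t x, s t x) (0, 1))
      + (inner ℝ (B t x) (B' t x) : ℝ) with hGdef
  -- derivatives are members
  have hρ'V : ∀ t, ρ' t ∈ V := by
    intro t
    have : ρ' t = -(T (u t) (ρ t)) := funext fun x => hadvρ t x
    rw [this]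
    exact V.neg_mem (hT _ (huX t) _ (hρV t))
  have hs'V : ∀ t, s' t ∈ V := by
    intro t
    have : s' t = -(T (u t) (s t)) := funext fun x => hadvs t x
    rw [this]
    exact V.neg_mem (hT _ (huX t) _ (hsV t))
  have hB'W : ∀ t, B' t ∈ W := by
    intro t
    have : B' t = -(S (u t) (B t)) := funext fun x => hadvB t x
    rw [this]
    exact W.neg_mem (hS _ (huX t) _ (hBW t))
  have hu'X : ∀ t, u' t ∈ X := deriv_mem_of_mem X u u' huX hud
  -- continuity of the e-derivative components
  have hedcont : Continuous (fderiv ℝ e) := he.continuous_fderiv one_ne_zero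
  have hD1 : Continuous fun p : ℝ × ℝ => fderiv ℝ e p (1, 0) :=
    hedcont.clm_apply continuous_const
  have hD2 : Continuous fun p : ℝ × ℝ => fderiv ℝ e p (0, 1) :=
    hedcont.clm_apply continuous_const
  -- pointwise derivative of F
  have hFderiv : ∀ t x, HasDerivAt (fun τ => F τ x) (G t x) t := by
    intro t x
    have hnu : HasDerivAt (fun τ => ‖u τ x‖ ^ 2)
        ((inner ℝ (u t x) (u' t x) : ℝ) + (inner ℝ (u' t x) (u t x) : ℝ)) t := by
      have h := (hud t x).inner ℝ (hud t x)
      simpa only [real_inner_self_eq_norm_sq] using h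
    have hnB : HasDerivAt (fun τ => ‖B τ x‖ ^ 2)
        ((inner ℝ (B t x) (B' t x) : ℝ) + (inner ℝ (B' t x) (B t x) : ℝ)) t := by
      have h := (hBd t x).inner ℝ (hBd t x)
      simpa only [real_inner_self_eq_norm_sq] using h
    have hpair : HasDerivAt (fun τ => (ρ τ x, s τ x)) (ρ' t x, s' t x) t :=
      (hρd t x).prodMk (hsd t x)
    have hecomp : HasDerivAt (fun τ => e (ρ τ x, s τ x))
        (fderiv ℝ e (ρ t x, s t x) (ρ' t x, s' t x)) t :=
      ((he.differentiable one_ne_zero) (ρ t x, s t x)).hasFDerivAt.comp_hasDerivAt t hpair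
    have h1 : HasDerivAt (fun τ => 1 / 2 * ρ τ x * ‖u τ x‖ ^ 2)
        (1 / 2 * ρ' t x * ‖u t x‖ ^ 2
          + 1 / 2 * ρ t x * ((inner ℝ (u t x) (u' t x) : ℝ) + (inner ℝ (u' t x) (u t x) : ℝ))) t := by
      have := ((hρd t x).const_mul (1 / 2 : ℝ)).mul hnu
      refine this.congr_deriv ?_
      try ring
    have h2 : HasDerivAt (fun τ => ρ τ x * e (ρ τ x, s τ x))
        (ρ' t x * e (ρ t x, s t x)
          + ρ t x * fderiv ℝ e (ρ t x, s t x) (ρ' t x, s' t x)) t :=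
      (hρd t x).mul hecomp
    have h3 : HasDerivAt (fun τ => 1 / 2 * ‖B τ x‖ ^ 2)
        (1 / 2 * ((inner ℝ (B t x) (B' t x) : ℝ) + (inner ℝ (B' t x) (B t x) : ℝ))) t :=
      hnB.const_mul (1 / 2 : ℝ)
    have := (h1.add h2).add h3
    refine this.congr_deriv ?_
    have hsplit : (ρ' t x, s' t x)
        = ρ' t x • ((1 : ℝ), (0 : ℝ)) + s' t x • ((0 : ℝ), (1 : ℝ)) := by
      simp [Prod.ext_iff]
    rw [hGdef]
    simp only [hsplit, map_add, ContinuousLinearMap.map_smul, smul_eq_mul]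
    rw [real_inner_comm (u' t x) (u t x), real_inner_comm (B' t x) (B t x)]
    ring
  -- ∫ G t = 0 via the momentum balance with v := u t
  have hGzero : ∀ t, (∫ x, G t x ∂μ) = 0 := by
    intro t
    have hmt := hmom t (u t) (huX t)
    have heq : ∀ x, ((inner ℝ (ρ' t x • u t x + ρ t x • u' t x) (u t x) : ℝ)
          - ρ t x * (inner ℝ (u t x) (b (u t) (u t) x) : ℝ)
          + (1 / 2 * ‖u t x‖ ^ 2 - e (ρ t x, s t x)
              - ρ t x * fderiv ℝ e (ρ t x, s t x) (1, 0)) * T (u t) (ρ t) x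
          - ρ t x * fderiv ℝ e (ρ t x, s t x) (0, 1) * T (u t) (s t) x
          - (inner ℝ (B t x) (S (u t) (B t) x) : ℝ)) = G t x := by
      intro x
      have hb0 : b (u t) (u t) x = 0 := by rw [hbdiag (u t) (huX t)]; rfl
      have hTρ : T (u t) (ρ t) x = -(ρ' t x) := by rw [hadvρ t x, neg_neg]
      have hTs : T (u t) (s t) x = -(s' t x) := by rw [hadvs t x, neg_neg]
      have hSB : S (u t) (B t) x = -(B' t x) := by rw [hadvB t x, neg_neg]
      rw [hb0, hTρ, hTs, hSB, hGdef]
      simp only [inner_add_left, real_inner_smul_left, inner_zero_right, inner_neg_right,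
        real_inner_self_eq_norm_sq, mul_zero]
      rw [real_inner_comm (u' t x) (u t x)]
      ring
    rw [show (∫ x, G t x ∂μ)
        = ∫ x, ((inner ℝ (ρ' t x • u t x + ρ t x • u' t x) (u t x) : ℝ)
          - ρ t x * (inner ℝ (u t x) (b (u t) (u t) x) : ℝ)
          + (1 / 2 * ‖u t x‖ ^ 2 - e (ρ t x, s t x)
              - ρ t x * fderiv ℝ e (ρ t x, s t x) (1, 0)) * T (u t) (ρ t) x
          - ρ t x * fderiv ℝ e (ρ t x, s t x) (0, 1) * T (u t) (s t) x
          - (inner ℝ (B t x) (S (u t) (B t) x) : ℝ)) ∂μ from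
      integral_congr_ae (Filter.EventuallyEq.of_eq (funext fun x => (heq x).symm))]
    exact hmt
  -- measurability
  have hFmeas : ∀ t, Measurable (F t) := by
    intro t
    have hρm := hVmeas _ (hρV t); have hsm := hVmeas _ (hsV t)
    have hum := hXmeas _ (huX t); have hBm := hWmeas _ (hBW t)
    exact ((((measurable_const.mul hρm).mul (hum.norm.pow_const 2)).add
      (hρm.mul ((he.continuous.measurable).comp (hρm.prodMk hsm)))).add
      (measurable_const.mul (hBm.norm.pow_const 2)))
  have hGmeas : ∀ t, Measurable (G t) := by
    intro t
    have hρm := hVmeas _ (hρV t); have hsm := hVmeas _ (hsV t)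
    have hum := hXmeas _ (huX t); have hBm := hWmeas _ (hBW t)
    have hρ'm := hVmeas _ (hρ'V t); have hs'm := hVmeas _ (hs'V t)
    have hu'm := hXmeas _ (hu'X t); have hB'm := hWmeas _ (hB'W t)
    have hD1m : Measurable fun x => fderiv ℝ e (ρ t x, s t x) (1, 0) :=
      (hD1.measurable).comp (hρm.prodMk hsm)
    have hD2m : Measurable fun x => fderiv ℝ e (ρ t x, s t x) (0, 1) :=
      (hD2.measurable).comp (hρm.prodMk hsm)
    have hem : Measurable fun x => e (ρ t x, s t x) :=
      (he.continuous.measurable).comp (hρm.prodMk hsm)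
    exact ((((((measurable_const.mul hρ'm).mul (hum.norm.pow_const 2)).add
      (hρm.mul (hum.inner hu'm))).add (hρ'm.mul hem)).add
      (hρm.mul ((hρ'm.mul hD1m).add (hs'm.mul hD2m)))).add (hBm.inner hB'm))
  -- energy has zero derivative everywhere
  have hE : ∀ t₀ : ℝ, HasDerivAt (fun t => ∫ x, F t x ∂μ) 0 t₀ := by
    intro t₀
    -- uniform bounds on [t₀ - 1, t₀ + 1]
    have hVbdd' : ∀ f ∈ V, ∃ C : ℝ, ∀ x, ‖f x‖ ≤ C := by
      simpa [Real.norm_eq_abs] using hVbdd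
    obtain ⟨Kρ, hKρ0, hKρ⟩ := unif_bound_of_curve V hVbdd' ρ hρV
      (fun x => continuous_iff_continuousAt.mpr fun t => (hρd t x).continuousAt)
      (t₀ - 1) (t₀ + 1)
    obtain ⟨Ks, hKs0, hKs⟩ := unif_bound_of_curve V hVbdd' s hsV
      (fun x => continuous_iff_continuousAt.mpr fun t => (hsd t x).continuousAt)
      (t₀ - 1) (t₀ + 1)
    obtain ⟨Ku, hKu0, hKu⟩ := unif_bound_of_curve X hXbdd u huX
      (fun x => continuous_iff_continuousAt.mpr fun t => (hud t x).continuousAt)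
      (t₀ - 1) (t₀ + 1)
    obtain ⟨KB, hKB0, hKB⟩ := unif_bound_of_curve W hWbdd B hBW
      (fun x => continuous_iff_continuousAt.mpr fun t => (hBd t x).continuousAt)
      (t₀ - 1) (t₀ + 1)
    obtain ⟨Kρ', hKρ'0, hKρ'⟩ := unif_bound_of_curve V hVbdd' ρ' hρ'V hρc (t₀ - 1) (t₀ + 1)
    obtain ⟨Ks', hKs'0, hKs'⟩ := unif_bound_of_curve V hVbdd' s' hs'V hsc (t₀ - 1) (t₀ + 1)
    obtain ⟨Ku', hKu'0, hKu'⟩ := unif_bound_of_curve X hXbdd u' hu'X huc (t₀ - 1) (t₀ + 1)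
    obtain ⟨KB', hKB'0, hKB'⟩ := unif_bound_of_curve W hWbdd B' hB'W hBc (t₀ - 1) (t₀ + 1)
    -- bounds for e and its derivative on the relevant compact set
    have hKcomp : IsCompact (Set.Icc (-Kρ) Kρ ×ˢ Set.Icc (-Ks) Ks) :=
      isCompact_Icc.prod isCompact_Icc
    obtain ⟨M1, hM1⟩ := hKcomp.exists_bound_of_continuousOn he.continuous.continuousOn
    obtain ⟨M2, hM2⟩ := hKcomp.exists_bound_of_continuousOn hD1.continuousOn
    obtain ⟨M3, hM3⟩ := hKcomp.exists_bound_of_continuousOn hD2.continuousOn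
    set Me : ℝ := max (max M1 (max M2 M3)) 0 with hMe
    have hMe0 : 0 ≤ Me := le_max_right _ _
    have hmemK : ∀ t ∈ Set.Icc (t₀ - 1) (t₀ + 1), ∀ x,
        (ρ t x, s t x) ∈ Set.Icc (-Kρ) Kρ ×ˢ Set.Icc (-Ks) Ks := by
      intro t ht x
      constructor
      · exact abs_le.mp (by simpa [Real.norm_eq_abs] using hKρ t ht x)
      · exact abs_le.mp (by simpa [Real.norm_eq_abs] using hKs t ht x)
    have hM1Me : M1 ≤ Me := (le_max_left M1 (max M2 M3)).trans (le_max_left _ 0)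
    have hM2Me : M2 ≤ Me := ((le_max_left M2 M3).trans (le_max_right M1 _)).trans (le_max_left _ 0)
    have hM3Me : M3 ≤ Me := ((le_max_right M2 M3).trans (le_max_right M1 _)).trans (le_max_left _ 0)
    have hMe1 : ∀ t ∈ Set.Icc (t₀ - 1) (t₀ + 1), ∀ x, |e (ρ t x, s t x)| ≤ Me :=
      by
        intro t ht x
        have h := hM1 _ (hmemK t ht x)
        rw [Real.norm_eq_abs] at h
        exact h.trans hM1Me
    have hMe2 : ∀ t ∈ Set.Icc (t₀ - 1) (t₀ + 1), ∀ x,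
        |fderiv ℝ e (ρ t x, s t x) (1, 0)| ≤ Me :=
      by
        intro t ht x
        have h := hM2 _ (hmemK t ht x)
        rw [Real.norm_eq_abs] at h
        exact h.trans hM2Me
    have hMe3 : ∀ t ∈ Set.Icc (t₀ - 1) (t₀ + 1), ∀ x,
        |fderiv ℝ e (ρ t x, s t x) (0, 1)| ≤ Me :=
      by
        intro t ht x
        have h := hM3 _ (hmemK t ht x)
        rw [Real.norm_eq_abs] at h
        exact h.trans hM3Me
    -- the uniform bound on G
    have hGbound : ∀ t ∈ Set.Icc (t₀ - 1) (t₀ + 1), ∀ x,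
        |G t x| ≤ 1 / 2 * Kρ' * Ku ^ 2 + Kρ * (Ku * Ku') + Kρ' * Me
          + Kρ * (Kρ' * Me + Ks' * Me) + KB * KB' := by
      intro t ht x
      have hbρ : |ρ t x| ≤ Kρ := by simpa [Real.norm_eq_abs] using hKρ t ht x
      have hbρ' : |ρ' t x| ≤ Kρ' := by simpa [Real.norm_eq_abs] using hKρ' t ht x
      have hbs' : |s' t x| ≤ Ks' := by simpa [Real.norm_eq_abs] using hKs' t ht x
      have hbu : ‖u t x‖ ≤ Ku := hKu t ht x
      have hbu' : ‖u' t x‖ ≤ Ku' := hKu' t ht x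
      have hbB : ‖B t x‖ ≤ KB := hKB t ht x
      have hbB' : ‖B' t x‖ ≤ KB' := hKB' t ht x
      have hbe := hMe1 t ht x
      have hbD1 := hMe2 t ht x
      have hbD2 := hMe3 t ht x
      have t1 : |1 / 2 * ρ' t x * ‖u t x‖ ^ 2| ≤ 1 / 2 * Kρ' * Ku ^ 2 := by
        rw [abs_mul, abs_mul, abs_of_nonneg (by norm_num : (0:ℝ) ≤ 1 / 2),
          abs_of_nonneg (by positivity : (0:ℝ) ≤ ‖u t x‖ ^ 2)]
        gcongr
      have t2 : |ρ t x * (inner ℝ (u t x) (u' t x) : ℝ)| ≤ Kρ * (Ku * Ku') := by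
        rw [abs_mul]
        exact mul_le_mul hbρ ((abs_real_inner_le_norm _ _).trans
          (mul_le_mul hbu hbu' (norm_nonneg _) hKu0)) (abs_nonneg _) hKρ0
      have t3 : |ρ' t x * e (ρ t x, s t x)| ≤ Kρ' * Me := by
        rw [abs_mul]
        exact mul_le_mul hbρ' hbe (abs_nonneg _) hKρ'0
      have t4 : |ρ t x * (ρ' t x * fderiv ℝ e (ρ t x, s t x) (1, 0)
          + s' t x * fderiv ℝ e (ρ t x, s t x) (0, 1))| ≤ Kρ * (Kρ' * Me + Ks' * Me) := by
        rw [abs_mul]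
        refine mul_le_mul hbρ ((abs_add_le _ _).trans (add_le_add ?_ ?_)) (abs_nonneg _) hKρ0
        · rw [abs_mul]; exact mul_le_mul hbρ' hbD1 (abs_nonneg _) hKρ'0
        · rw [abs_mul]; exact mul_le_mul hbs' hbD2 (abs_nonneg _) hKs'0
      have t5 : |(inner ℝ (B t x) (B' t x) : ℝ)| ≤ KB * KB' :=
        (abs_real_inner_le_norm _ _).trans (mul_le_mul hbB hbB' (norm_nonneg _) hKB0)
      calc |G t x| ≤ |1 / 2 * ρ' t x * ‖u t x‖ ^ 2 + ρ t x * (inner ℝ (u t x) (u' t x) : ℝ)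
              + ρ' t x * e (ρ t x, s t x)
              + ρ t x * (ρ' t x * fderiv ℝ e (ρ t x, s t x) (1, 0)
                  + s' t x * fderiv ℝ e (ρ t x, s t x) (0, 1))|
            + |(inner ℝ (B t x) (B' t x) : ℝ)| := abs_add_le _ _
        _ ≤ (|1 / 2 * ρ' t x * ‖u t x‖ ^ 2 + ρ t x * (inner ℝ (u t x) (u' t x) : ℝ)
              + ρ' t x * e (ρ t x, s t x)|
            + |ρ t x * (ρ' t x * fderiv ℝ e (ρ t x, s t x) (1, 0)
                + s' t x * fderiv ℝ e (ρ t x, s t x) (0, 1))|)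
            + |(inner ℝ (B t x) (B' t x) : ℝ)| := by gcongr; exact abs_add_le _ _
        _ ≤ ((|1 / 2 * ρ' t x * ‖u t x‖ ^ 2 + ρ t x * (inner ℝ (u t x) (u' t x) : ℝ)|
              + |ρ' t x * e (ρ t x, s t x)|)
            + |ρ t x * (ρ' t x * fderiv ℝ e (ρ t x, s t x) (1, 0)
                + s' t x * fderiv ℝ e (ρ t x, s t x) (0, 1))|)
            + |(inner ℝ (B t x) (B' t x) : ℝ)| := by gcongr; exact abs_add_le _ _
        _ ≤ (((|1 / 2 * ρ' t x * ‖u t x‖ ^ 2| + |ρ t x * (inner ℝ (u t x) (u' t x) : ℝ)|)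
              + |ρ' t x * e (ρ t x, s t x)|)
            + |ρ t x * (ρ' t x * fderiv ℝ e (ρ t x, s t x) (1, 0)
                + s' t x * fderiv ℝ e (ρ t x, s t x) (0, 1))|)
            + |(inner ℝ (B t x) (B' t x) : ℝ)| := by gcongr; exact abs_add_le _ _
        _ ≤ 1 / 2 * Kρ' * Ku ^ 2 + Kρ * (Ku * Ku') + Kρ' * Me
            + Kρ * (Kρ' * Me + Ks' * Me) + KB * KB' := by
          exact add_le_add (add_le_add (add_le_add (add_le_add t1 t2) t3) t4) t5
    -- integrability of F t₀
    have ht₀mem : t₀ ∈ Set.Icc (t₀ - 1) (t₀ + 1) := by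
      constructor <;> linarith
    have hFbound : ∀ x, |F t₀ x| ≤ 1 / 2 * Kρ * Ku ^ 2 + Kρ * Me + 1 / 2 * KB ^ 2 := by
      intro x
      have hbρ : |ρ t₀ x| ≤ Kρ := by simpa [Real.norm_eq_abs] using hKρ t₀ ht₀mem x
      have hbu : ‖u t₀ x‖ ≤ Ku := hKu t₀ ht₀mem x
      have hbB : ‖B t₀ x‖ ≤ KB := hKB t₀ ht₀mem x
      have hbe := hMe1 t₀ ht₀mem x
      have t1 : |1 / 2 * ρ t₀ x * ‖u t₀ x‖ ^ 2| ≤ 1 / 2 * Kρ * Ku ^ 2 := by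
        rw [abs_mul, abs_mul, abs_of_nonneg (by norm_num : (0:ℝ) ≤ 1 / 2),
          abs_of_nonneg (by positivity : (0:ℝ) ≤ ‖u t₀ x‖ ^ 2)]
        gcongr
      have t2 : |ρ t₀ x * e (ρ t₀ x, s t₀ x)| ≤ Kρ * Me := by
        rw [abs_mul]
        exact mul_le_mul hbρ hbe (abs_nonneg _) hKρ0
      have t3 : |1 / 2 * ‖B t₀ x‖ ^ 2| ≤ 1 / 2 * KB ^ 2 := by
        rw [abs_mul, abs_of_nonneg (by norm_num : (0:ℝ) ≤ 1 / 2),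
          abs_of_nonneg (by positivity : (0:ℝ) ≤ ‖B t₀ x‖ ^ 2)]
        gcongr
      calc |F t₀ x| ≤ |1 / 2 * ρ t₀ x * ‖u t₀ x‖ ^ 2 + ρ t₀ x * e (ρ t₀ x, s t₀ x)|
            + |1 / 2 * ‖B t₀ x‖ ^ 2| := abs_add_le _ _
        _ ≤ (|1 / 2 * ρ t₀ x * ‖u t₀ x‖ ^ 2| + |ρ t₀ x * e (ρ t₀ x, s t₀ x)|)
            + |1 / 2 * ‖B t₀ x‖ ^ 2| := by gcongr; exact abs_add_le _ _
        _ ≤ 1 / 2 * Kρ * Ku ^ 2 + Kρ * Me + 1 / 2 * KB ^ 2 :=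
          add_le_add (add_le_add t1 t2) t3
    have hFint : Integrable (F t₀) μ :=
      (integrable_const (1 / 2 * Kρ * Ku ^ 2 + Kρ * Me + 1 / 2 * KB ^ 2)).mono'
        ((hFmeas t₀).aestronglyMeasurable)
        (Filter.Eventually.of_forall fun x => by
          simpa [Real.norm_eq_abs] using hFbound x)
    -- apply differentiation under the integral sign
    have key := hasDerivAt_integral_of_dominated_loc_of_deriv_le
      (F := F) (F' := G) (μ := μ) (x₀ := t₀)
      (bound := fun _ => 1 / 2 * Kρ' * Ku ^ 2 + Kρ * (Ku * Ku') + Kρ' * Me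
        + Kρ * (Kρ' * Me + Ks' * Me) + KB * KB')
      (Metric.ball_mem_nhds t₀ one_pos)
      (Filter.Eventually.of_forall fun t => (hFmeas t).aestronglyMeasurable)
      hFint
      ((hGmeas t₀).aestronglyMeasurable)
      (Filter.Eventually.of_forall fun x => fun t htb => by
        have htI : t ∈ Set.Icc (t₀ - 1) (t₀ + 1) := by
          rw [Real.ball_eq_Ioo] at htb
          exact Set.Ioo_subset_Icc_self htb
        simpa [Real.norm_eq_abs] using hGbound t htI x)
      (integrable_const _)
      (Filter.Eventually.of_forall fun x => fun t _ => hFderiv t x)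
    rw [hGzero t₀] at key
    exact key.2
  -- conclude: the energy is constant
  intro t₁ t₂
  exact is_const_of_deriv_eq_zero (fun t => (hE t).differentiableAt)
    (fun t => (hE t).deriv) t₁ t₂
end

section
/- Let (Ω, μ) be a measure space with μ(Ω) < ∞ and let n, m ≥ 1. Let V be a finite-dimensional space of bounded measurable functions Ω → ℝ, let X be a finite-dimensional space of bounded measurable functions Ω → ℝⁿ, and let W be a finite-dimensional space of bounded measurable functions Ω → ℝᵐ. Let e : ℝ² → ℝ be continuous and set g(r,σ) = r·e(r,σ). For each v ∈ X let T_v : V → V and S_v : W → W be maps, and let b : X × X → X satisfy b(v,v) = 0 for all v ∈ X. Let Δt ≠ 0, let ρ⁰, ρ¹, s⁰, s¹ ∈ V, u⁰, u¹ ∈ X, B⁰, B¹ ∈ W, and suppose there is δ > 0 with |ρ¹(x) − ρ⁰(x)| ≥ δ and |s¹(x) − s⁰(x)| ≥ δ for all x ∈ Ω. Write a^{1/2} = (a⁰ + a¹)/2 for each variable. Assume the discrete advection equations (ρ¹ − ρ⁰)/Δt = −T_{u^{1/2}}(ρ^{1/2}), (s¹ − s⁰)/Δt = −T_{u^{1/2}}(s^{1/2}),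 (B¹ − B⁰)/Δt = −S_{u^{1/2}}(B^{1/2}), and the discrete momentum equation: for all v ∈ X, ∫_Ω [ ((ρ¹u¹ − ρ⁰u⁰)/Δt)·v − ρ^{1/2} u^{1/2}·b(v, u^{1/2}) + ( (u⁰·u¹)/2 − ½( (g(ρ¹,s¹) − g(ρ⁰,s¹))/(ρ¹−ρ⁰) + (g(ρ¹,s⁰) − g(ρ⁰,s⁰))/(ρ¹−ρ⁰) ) )·(T_v ρ^{1/2}) − ½( (g(ρ¹,s¹) − g(ρ¹,s⁰))/(s¹−s⁰) + (g(ρ⁰,s¹) − g(ρ⁰,s⁰))/(s¹−s⁰) )·(T_v s^{1/2}) − B^{1/2}·(S_v B^{1/2}) ] dμ = 0, where all operations are pointwise on Ω. Then ∫_Ω [ ½ρ¹|u¹|² + g(ρ¹,s¹) + ½|B¹|² ] dμ = ∫_Ω [ ½ρ⁰|u⁰|² + g(ρ⁰,s⁰) + ½|B⁰|² ] dμ. -/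
open MeasureTheory

set_option maxHeartbeats 1000000

/-- Energy conservation of the fully discrete (midpoint-in-time) variational
scheme: under the discrete advection equations and the discrete momentum
balance with discrete gradients of the internal energy, the total energy
`∫ ½ρ|u|² + ρe(ρ,s) + ½|B|²` is the same at both time levels. -/
theorem fully_discrete_energy_conservation
    {Ω : Type*} [MeasurableSpace Ω] (μ : Measure Ω) [IsFiniteMeasure μ]
    (n m : ℕ) (hn : 1 ≤ n) (hm : 1 ≤ m)
    (V : Submodule ℝ (Ω → ℝ))
    (X : Submodule ℝ (Ω → EuclideanSpace ℝ (Fin n)))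
    (W : Submodule ℝ (Ω → EuclideanSpace ℝ (Fin m)))
    (hVfin : FiniteDimensional ℝ V) (hXfin : FiniteDimensional ℝ X)
    (hWfin : FiniteDimensional ℝ W)
    (hVmeas : ∀ f ∈ V, Measurable f)
    (hVbdd : ∀ f ∈ V, ∃ C : ℝ, ∀ x, |f x| ≤ C)
    (hXmeas : ∀ f ∈ X, Measurable f)
    (hXbdd : ∀ f ∈ X, ∃ C : ℝ, ∀ x, ‖f x‖ ≤ C)
    (hWmeas : ∀ f ∈ W, Measurable f)
    (hWbdd : ∀ f ∈ W, ∃ C : ℝ, ∀ x, ‖f x‖ ≤ C)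
    (e : ℝ × ℝ → ℝ) (he : Continuous e)
    (g : ℝ → ℝ → ℝ) (hg : ∀ r σ : ℝ, g r σ = r * e (r, σ))
    (T : (Ω → EuclideanSpace ℝ (Fin n)) → (Ω → ℝ) → (Ω → ℝ))
    (hT : ∀ v ∈ X, ∀ f ∈ V, T v f ∈ V)
    (S : (Ω → EuclideanSpace ℝ (Fin n)) →
      (Ω → EuclideanSpace ℝ (Fin m)) → (Ω → EuclideanSpace ℝ (Fin m)))
    (hS : ∀ v ∈ X, ∀ w ∈ W, S v w ∈ W)
    (b : (Ω → EuclideanSpace ℝ (Fin n)) → (Ω → EuclideanSpace ℝ (Fin n)) →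
      (Ω → EuclideanSpace ℝ (Fin n)))
    (hb : ∀ v ∈ X, ∀ w ∈ X, b v w ∈ X)
    (hbdiag : ∀ v ∈ X, b v v = 0)
    (Δt : ℝ) (hΔt : Δt ≠ 0)
    (ρ₀ ρ₁ s₀ s₁ : Ω → ℝ) (u₀ u₁ : Ω → EuclideanSpace ℝ (Fin n))
    (B₀ B₁ : Ω → EuclideanSpace ℝ (Fin m))
    (hρ₀ : ρ₀ ∈ V) (hρ₁ : ρ₁ ∈ V) (hs₀ : s₀ ∈ V) (hs₁ : s₁ ∈ V)
    (hu₀ : u₀ ∈ X) (hu₁ : u₁ ∈ X) (hB₀ : B₀ ∈ W) (hB₁ : B₁ ∈ W)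
    (δ : ℝ) (hδ : 0 < δ)
    (hρsep : ∀ x, δ ≤ |ρ₁ x - ρ₀ x|) (hssep : ∀ x, δ ≤ |s₁ x - s₀ x|)
    (hadvρ : ∀ x, (ρ₁ x - ρ₀ x) / Δt
      = -T (fun y => (2:ℝ)⁻¹ • (u₀ y + u₁ y)) (fun y => (ρ₀ y + ρ₁ y) / 2) x)
    (hadvs : ∀ x, (s₁ x - s₀ x) / Δt
      = -T (fun y => (2:ℝ)⁻¹ • (u₀ y + u₁ y)) (fun y => (s₀ y + s₁ y) / 2) x)
    (hadvB : ∀ x, Δt⁻¹ • (B₁ x - B₀ x)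
      = -S (fun y => (2:ℝ)⁻¹ • (u₀ y + u₁ y)) (fun y => (2:ℝ)⁻¹ • (B₀ y + B₁ y)) x)
    (hmom : ∀ v ∈ X,
      (∫ x, ((inner ℝ (Δt⁻¹ • (ρ₁ x • u₁ x - ρ₀ x • u₀ x)) (v x) : ℝ)
          - ((ρ₀ x + ρ₁ x) / 2)
            * (inner ℝ ((2:ℝ)⁻¹ • (u₀ x + u₁ x))
                (b v (fun y => (2:ℝ)⁻¹ • (u₀ y + u₁ y)) x) : ℝ)
          + ((inner ℝ (u₀ x) (u₁ x) : ℝ) / 2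
              - 1 / 2 * ((g (ρ₁ x) (s₁ x) - g (ρ₀ x) (s₁ x)) / (ρ₁ x - ρ₀ x)
                  + (g (ρ₁ x) (s₀ x) - g (ρ₀ x) (s₀ x)) / (ρ₁ x - ρ₀ x)))
            * T v (fun y => (ρ₀ y + ρ₁ y) / 2) x
          - 1 / 2 * ((g (ρ₁ x) (s₁ x) - g (ρ₁ x) (s₀ x)) / (s₁ x - s₀ x)
              + (g (ρ₀ x) (s₁ x) - g (ρ₀ x) (s₀ x)) / (s₁ x - s₀ x))
            * T v (fun y => (s₀ y + s₁ y) / 2) x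
          - (inner ℝ ((2:ℝ)⁻¹ • (B₀ x + B₁ x))
              (S v (fun y => (2:ℝ)⁻¹ • (B₀ y + B₁ y)) x) : ℝ)) ∂μ) = 0) :
    (∫ x, (1 / 2 * ρ₁ x * ‖u₁ x‖ ^ 2 + g (ρ₁ x) (s₁ x) + 1 / 2 * ‖B₁ x‖ ^ 2) ∂μ)
      = ∫ x, (1 / 2 * ρ₀ x * ‖u₀ x‖ ^ 2 + g (ρ₀ x) (s₀ x)
          + 1 / 2 * ‖B₀ x‖ ^ 2) ∂μ := by
  classical
  set uh : Ω → EuclideanSpace ℝ (Fin n) := fun y => (2:ℝ)⁻¹ • (u₀ y + u₁ y) with huh_def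
  have huh : uh ∈ X := Submodule.smul_mem _ _ (Submodule.add_mem _ hu₀ hu₁)
  have hmom' := hmom uh huh
  have hbzero : b uh uh = 0 := hbdiag uh huh
  -- integrability of the two energy densities
  obtain ⟨Cρ, hCρ⟩ := hVbdd ρ₀ hρ₀
  obtain ⟨Cρ', hCρ'⟩ := hVbdd ρ₁ hρ₁
  obtain ⟨Cs, hCs⟩ := hVbdd s₀ hs₀
  obtain ⟨Cs', hCs'⟩ := hVbdd s₁ hs₁
  obtain ⟨Cu, hCu⟩ := hXbdd u₀ hu₀
  obtain ⟨Cu', hCu'⟩ := hXbdd u₁ hu₁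
  obtain ⟨CB, hCB⟩ := hWbdd B₀ hB₀
  obtain ⟨CB', hCB'⟩ := hWbdd B₁ hB₁
  set K : Set (ℝ × ℝ) := (Set.Icc (-(|Cρ|+|Cρ'|)) (|Cρ|+|Cρ'|)) ×ˢ
    (Set.Icc (-(|Cs|+|Cs'|)) (|Cs|+|Cs'|)) with hK
  have hKcomp : IsCompact K := (isCompact_Icc).prod isCompact_Icc
  obtain ⟨Ce, hCe⟩ := hKcomp.exists_bound_of_continuousOn he.continuousOn
  have hmem0 : ∀ x, (ρ₀ x, s₀ x) ∈ K := by
    intro x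
    have h0 : |ρ₀ x| ≤ |Cρ|+|Cρ'| :=
      le_trans (hCρ x) (le_trans (le_abs_self _) (le_add_of_nonneg_right (abs_nonneg _)))
    have h2 : |s₀ x| ≤ |Cs|+|Cs'| :=
      le_trans (hCs x) (le_trans (le_abs_self _) (le_add_of_nonneg_right (abs_nonneg _)))
    simp only [hK, Set.mem_prod, Set.mem_Icc]
    exact ⟨abs_le.mp h0, abs_le.mp h2⟩
  have hmem1 : ∀ x, (ρ₁ x, s₁ x) ∈ K := by
    intro x
    have h0 : |ρ₁ x| ≤ |Cρ|+|Cρ'| :=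
      le_trans (hCρ' x) (le_trans (le_abs_self _) (le_add_of_nonneg_left (abs_nonneg _)))
    have h2 : |s₁ x| ≤ |Cs|+|Cs'| :=
      le_trans (hCs' x) (le_trans (le_abs_self _) (le_add_of_nonneg_left (abs_nonneg _)))
    simp only [hK, Set.mem_prod, Set.mem_Icc]
    exact ⟨abs_le.mp h0, abs_le.mp h2⟩
  have hint : ∀ (ρ s : Ω → ℝ) (u : Ω → EuclideanSpace ℝ (Fin n))
      (B : Ω → EuclideanSpace ℝ (Fin m)) (Cr Cu0 CB0 : ℝ),
      Measurable ρ → Measurable s → Measurable u → Measurable B →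
      (∀ x, |ρ x| ≤ Cr) → (∀ x, ‖u x‖ ≤ Cu0) → (∀ x, ‖B x‖ ≤ CB0) →
      (∀ x, (ρ x, s x) ∈ K) →
      Integrable (fun x => 1 / 2 * ρ x * ‖u x‖ ^ 2 + g (ρ x) (s x)
        + 1 / 2 * ‖B x‖ ^ 2) μ := by
    intro ρ s u B Cr Cu0 CB0 hρm hsm hum hBm hρb hub hBb hmem
    have hmeas : Measurable (fun x => 1 / 2 * ρ x * ‖u x‖ ^ 2 + g (ρ x) (s x)
        + 1 / 2 * ‖B x‖ ^ 2) := by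
      have hge : Measurable (fun x => g (ρ x) (s x)) := by
        simp only [hg]
        exact hρm.mul (he.measurable.comp (hρm.prodMk hsm))
      exact ((measurable_const.mul hρm |>.mul (hum.norm.pow measurable_const)).add
        hge).add (measurable_const.mul (hBm.norm.pow measurable_const))
    refine Integrable.mono' (integrable_const (1/2 * |Cr| * Cu0^2 + |Cr| * Ce
      + 1/2 * CB0^2)) hmeas.aestronglyMeasurable (Filter.Eventually.of_forall fun x => ?_)
    have hu0 : (0:ℝ) ≤ ‖u x‖ := norm_nonneg _
    have hB0 : (0:ℝ) ≤ ‖B x‖ := norm_nonneg _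
    have h1 : |ρ x| ≤ |Cr| := le_trans (hρb x) (le_abs_self _)
    have h2 : ‖u x‖ ≤ Cu0 := hub x
    have h3 : ‖B x‖ ≤ CB0 := hBb x
    have h4 : |e (ρ x, s x)| ≤ Ce := by
      have := hCe _ (hmem x); simpa using this
    have h5 : |g (ρ x) (s x)| ≤ |Cr| * Ce := by
      rw [hg, abs_mul]
      exact mul_le_mul h1 h4 (abs_nonneg _) (abs_nonneg _)
    have hsq : ‖u x‖^2 ≤ Cu0^2 := by nlinarith
    have hsqB : ‖B x‖^2 ≤ CB0^2 := by nlinarith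
    have h6 : |1/2 * ρ x * ‖u x‖^2| ≤ 1/2 * |Cr| * Cu0^2 := by
      rw [abs_mul, abs_mul, abs_of_nonneg (by positivity : (0:ℝ) ≤ ‖u x‖^2),
        abs_of_nonneg (by norm_num : (0:ℝ) ≤ (1:ℝ)/2)]
      have habs : |ρ x| * ‖u x‖^2 ≤ |Cr| * Cu0^2 :=
        mul_le_mul h1 hsq (by positivity) (abs_nonneg _)
      linarith
    have h7 : |1/2 * ‖B x‖^2| ≤ 1/2 * CB0^2 := by
      rw [abs_mul, abs_of_nonneg (by positivity : (0:ℝ) ≤ ‖B x‖^2),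
        abs_of_nonneg (by norm_num : (0:ℝ) ≤ (1:ℝ)/2)]
      linarith
    simp only [Real.norm_eq_abs]
    calc |1/2 * ρ x * ‖u x‖^2 + g (ρ x) (s x) + 1/2 * ‖B x‖^2|
        ≤ |1/2 * ρ x * ‖u x‖^2 + g (ρ x) (s x)| + |1/2 * ‖B x‖^2| := abs_add_le _ _
      _ ≤ |1/2 * ρ x * ‖u x‖^2| + |g (ρ x) (s x)| + |1/2 * ‖B x‖^2| := by
          have := abs_add_le (1/2 * ρ x * ‖u x‖^2) (g (ρ x) (s x)); linarith
      _ ≤ 1/2 * |Cr| * Cu0^2 + |Cr| * Ce + 1/2 * CB0^2 := by linarith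
  have hI1 : Integrable (fun x => 1 / 2 * ρ₁ x * ‖u₁ x‖ ^ 2 + g (ρ₁ x) (s₁ x)
      + 1 / 2 * ‖B₁ x‖ ^ 2) μ :=
    hint ρ₁ s₁ u₁ B₁ Cρ' Cu' CB' (hVmeas _ hρ₁) (hVmeas _ hs₁) (hXmeas _ hu₁)
      (hWmeas _ hB₁) hCρ' hCu' hCB' hmem1
  have hI0 : Integrable (fun x => 1 / 2 * ρ₀ x * ‖u₀ x‖ ^ 2 + g (ρ₀ x) (s₀ x)
      + 1 / 2 * ‖B₀ x‖ ^ 2) μ :=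
    hint ρ₀ s₀ u₀ B₀ Cρ Cu CB (hVmeas _ hρ₀) (hVmeas _ hs₀) (hXmeas _ hu₀)
      (hWmeas _ hB₀) hCρ hCu hCB hmem0
  -- pointwise identity
  have hpt : ∀ x,
      ((inner ℝ (Δt⁻¹ • (ρ₁ x • u₁ x - ρ₀ x • u₀ x)) (uh x) : ℝ)
          - ((ρ₀ x + ρ₁ x) / 2)
            * (inner ℝ ((2:ℝ)⁻¹ • (u₀ x + u₁ x))
                (b uh (fun y => (2:ℝ)⁻¹ • (u₀ y + u₁ y)) x) : ℝ)
          + ((inner ℝ (u₀ x) (u₁ x) : ℝ) / 2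
              - 1 / 2 * ((g (ρ₁ x) (s₁ x) - g (ρ₀ x) (s₁ x)) / (ρ₁ x - ρ₀ x)
                  + (g (ρ₁ x) (s₀ x) - g (ρ₀ x) (s₀ x)) / (ρ₁ x - ρ₀ x)))
            * T uh (fun y => (ρ₀ y + ρ₁ y) / 2) x
          - 1 / 2 * ((g (ρ₁ x) (s₁ x) - g (ρ₁ x) (s₀ x)) / (s₁ x - s₀ x)
              + (g (ρ₀ x) (s₁ x) - g (ρ₀ x) (s₀ x)) / (s₁ x - s₀ x))
            * T uh (fun y => (s₀ y + s₁ y) / 2) x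
          - (inner ℝ ((2:ℝ)⁻¹ • (B₀ x + B₁ x))
              (S uh (fun y => (2:ℝ)⁻¹ • (B₀ y + B₁ y)) x) : ℝ))
        = Δt⁻¹ * ((1 / 2 * ρ₁ x * ‖u₁ x‖ ^ 2 + g (ρ₁ x) (s₁ x) + 1 / 2 * ‖B₁ x‖ ^ 2)
            - (1 / 2 * ρ₀ x * ‖u₀ x‖ ^ 2 + g (ρ₀ x) (s₀ x) + 1 / 2 * ‖B₀ x‖ ^ 2)) := by
    intro x
    have hdρ : ρ₁ x - ρ₀ x ≠ 0 := by
      intro h; have := hρsep x; rw [h, abs_zero] at this; linarith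
    have hds : s₁ x - s₀ x ≠ 0 := by
      intro h; have := hssep x; rw [h, abs_zero] at this; linarith
    have hTρ : T uh (fun y => (ρ₀ y + ρ₁ y) / 2) x = -((ρ₁ x - ρ₀ x) / Δt) := by
      have h := hadvρ x; linarith
    have hTs : T uh (fun y => (s₀ y + s₁ y) / 2) x = -((s₁ x - s₀ x) / Δt) := by
      have h := hadvs x; linarith
    have hSB : S uh (fun y => (2:ℝ)⁻¹ • (B₀ y + B₁ y)) x
        = -(Δt⁻¹ • (B₁ x - B₀ x)) := by
      rw [hadvB x, neg_neg]
    rw [hbzero, hTρ, hTs, hSB, huh_def]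
    simp only [Pi.zero_apply, inner_zero_right, mul_zero, sub_zero]
    simp only [real_inner_smul_left, real_inner_smul_right, inner_sub_left,
      inner_sub_right, inner_add_left, inner_add_right, real_inner_self_eq_norm_sq,
      inner_neg_right, smul_eq_mul]
    rw [real_inner_comm (u₁ x) (u₀ x), real_inner_comm (B₁ x) (B₀ x)]
    field_simp
    ring
  -- conclude
  have key : (∫ x, ((inner ℝ (Δt⁻¹ • (ρ₁ x • u₁ x - ρ₀ x • u₀ x)) (uh x) : ℝ)
          - ((ρ₀ x + ρ₁ x) / 2)
            * (inner ℝ ((2:ℝ)⁻¹ • (u₀ x + u₁ x))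
                (b uh (fun y => (2:ℝ)⁻¹ • (u₀ y + u₁ y)) x) : ℝ)
          + ((inner ℝ (u₀ x) (u₁ x) : ℝ) / 2
              - 1 / 2 * ((g (ρ₁ x) (s₁ x) - g (ρ₀ x) (s₁ x)) / (ρ₁ x - ρ₀ x)
                  + (g (ρ₁ x) (s₀ x) - g (ρ₀ x) (s₀ x)) / (ρ₁ x - ρ₀ x)))
            * T uh (fun y => (ρ₀ y + ρ₁ y) / 2) x
          - 1 / 2 * ((g (ρ₁ x) (s₁ x) - g (ρ₁ x) (s₀ x)) / (s₁ x - s₀ x)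
              + (g (ρ₀ x) (s₁ x) - g (ρ₀ x) (s₀ x)) / (s₁ x - s₀ x))
            * T uh (fun y => (s₀ y + s₁ y) / 2) x
          - (inner ℝ ((2:ℝ)⁻¹ • (B₀ x + B₁ x))
              (S uh (fun y => (2:ℝ)⁻¹ • (B₀ y + B₁ y)) x) : ℝ)) ∂μ)
      = Δt⁻¹ * ((∫ x, (1 / 2 * ρ₁ x * ‖u₁ x‖ ^ 2 + g (ρ₁ x) (s₁ x)
            + 1 / 2 * ‖B₁ x‖ ^ 2) ∂μ)
          - ∫ x, (1 / 2 * ρ₀ x * ‖u₀ x‖ ^ 2 + g (ρ₀ x) (s₀ x)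
            + 1 / 2 * ‖B₀ x‖ ^ 2) ∂μ) := by
    rw [integral_congr_ae (Filter.Eventually.of_forall hpt), integral_const_mul,
      integral_sub hI1 hI0]
  rw [key] at hmom'
  have hΔt' : Δt⁻¹ ≠ 0 := inv_ne_zero hΔt
  have := (mul_eq_zero.mp hmom').resolve_left hΔt'
  linarith [this]
end
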